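/- arXiv:1811.12910 — 7 statements merged into one kernel-verified Lean document; each statement's English description precedes it below -/
import Mathlib

section
/- Let 0 < α < 1, let g : [0,T] → ℝ be twice continuously differentiable, and let 0 = t_0 < t_1 < … < t_N = T be a partition with τ_n = t_n − t_{n−1}. Then for every n with 1 ≤ n ≤ N, the quantity (R_2)^n = ∫_{t_{n−1}}^{t_n} ( g(s) − (g(t_{n−1}) + g(t_n))/2 ) (t_n − s)^{α−1} ds satisfies |(R_2)^n| ≤ (τ_n^{1+α})/(2α) · max_{t_{n−1}≤t≤t_n} |g′(t)|. -/
/-! The trapezoidal weight `(g(t_{n-1}) + g(t_n))/2` differs from `g(s)` by at most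
`τ_n/2 · max |g'|` on `[t_{n-1}, t_n]`, by the mean value theorem applied from both endpoints.
The kernel `(t_n - s)^{α-1}` is nonnegative with integral `τ_n^α/α` over the interval, so the
error is at most `τ_n/2 · max |g'| · τ_n^α/α`. -/

open MeasureTheory Set intervalIntegral

lemma integral_sub_rpow_sub_one {α : ℝ} (hα : 0 < α) (a b : ℝ) :
    ∫ s in a..b, (b - s) ^ (α - 1) = (b - a) ^ α / α := by
  rw [integral_comp_sub_left (fun x : ℝ => x ^ (α - 1)) b,
    integral_rpow (Or.inl (by linarith)), sub_self, sub_add_cancel, Real.zero_rpow hα.ne',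
    sub_zero]

lemma intervalIntegrable_sub_rpow_sub_one {α : ℝ} (hα : 0 < α) (a b : ℝ) :
    IntervalIntegrable (fun s => (b - s) ^ (α - 1)) volume a b := by
  simpa using (intervalIntegrable_rpow' (r := α - 1) (a := b - a) (b := b - b)
    (by linarith)).comp_sub_left b

lemma abs_integral_mul_sub_rpow_le {f : ℝ → ℝ} {α a b C : ℝ} (hα : 0 < α) (hab : a ≤ b)
    (hf : ContinuousOn f (Icc a b)) (hC : ∀ s ∈ Icc a b, |f s| ≤ C) :
    |∫ s in a..b, f s * (b - s) ^ (α - 1)| ≤ C * ((b - a) ^ α / α) := by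
  have hk := intervalIntegrable_sub_rpow_sub_one hα a b
  have hfk : IntervalIntegrable (fun s => f s * (b - s) ^ (α - 1)) volume a b :=
    hk.continuousOn_mul (by rwa [uIcc_of_le hab])
  calc |∫ s in a..b, f s * (b - s) ^ (α - 1)|
      ≤ ∫ s in a..b, |f s * (b - s) ^ (α - 1)| := abs_integral_le_integral_abs hab
    _ ≤ ∫ s in a..b, C * (b - s) ^ (α - 1) := by
      refine integral_mono_on hab hfk.abs (hk.const_mul C) fun s hs => ?_
      have hk0 : 0 ≤ (b - s) ^ (α - 1) := Real.rpow_nonneg (sub_nonneg.2 hs.2) _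
      rw [abs_mul, abs_of_nonneg hk0]
      exact mul_le_mul_of_nonneg_right (hC s hs) hk0
    _ = C * ((b - a) ^ α / α) := by
      rw [intervalIntegral.integral_const_mul, integral_sub_rpow_sub_one hα]

lemma abs_sub_avg_endpoints_le {g g' : ℝ → ℝ} {a b M : ℝ}
    (hg : ∀ x ∈ Icc a b, HasDerivWithinAt g (g' x) (Icc a b) x)
    (hM : ∀ x ∈ Icc a b, |g' x| ≤ M) {s : ℝ} (hs : s ∈ Icc a b) :
    |g s - (g a + g b) / 2| ≤ M * (b - a) / 2 := by
  have hlip : ∀ x ∈ Icc a b, ∀ y ∈ Icc a b, |g y - g x| ≤ M * |y - x| := fun x hx y hy => by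
    simpa using (convex_Icc a b).norm_image_sub_le_of_norm_hasDerivWithin_le hg
      (fun z hz => by simpa using hM z hz) hx hy
  have hsa := hlip a (left_mem_Icc.2 (hs.1.trans hs.2)) s hs
  have hsb := hlip b (right_mem_Icc.2 (hs.1.trans hs.2)) s hs
  rw [abs_of_nonneg (sub_nonneg.2 hs.1)] at hsa
  rw [abs_of_nonpos (sub_nonpos.2 hs.2)] at hsb
  rw [show g s - (g a + g b) / 2 = ((g s - g a) + (g s - g b)) / 2 by ring, abs_div, abs_two]
  linarith [abs_add_le (g s - g a) (g s - g b)]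

lemma abs_le_sSup_image_abs {X : Type*} [TopologicalSpace X] {f : X → ℝ} {K : Set X}
    (hK : IsCompact K) (hf : ContinuousOn f K) {x : X} (hx : x ∈ K) :
    |f x| ≤ sSup ((fun s => |f s|) '' K) :=
  le_csSup (hK.bddAbove_image (continuous_abs.comp_continuousOn hf)) ⟨x, hx, rfl⟩

theorem quadrature_error_last_interval_general
    (α T : ℝ) (hα0 : 0 < α)
    (g g' g'' : ℝ → ℝ)
    (hg' : ∀ t ∈ Set.Icc (0 : ℝ) T, HasDerivAt g (g' t) t)
    (hg'' : ∀ t ∈ Set.Icc (0 : ℝ) T, HasDerivAt g' (g'' t) t)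
    (N : ℕ) (t : ℕ → ℝ)
    (ht0 : t 0 = 0) (htN : t N = T)
    (htmono : ∀ k < N, t k < t (k + 1))
    (n : ℕ) (hn1 : 1 ≤ n) (hnN : n ≤ N) :
    |∫ s in t (n - 1)..t n,
        (g s - (g (t (n - 1)) + g (t n)) / 2) * (t n - s) ^ (α - 1)| ≤
      (t n - t (n - 1)) ^ (1 + α) / (2 * α) *
        sSup ((fun s => |g' s|) '' Set.Icc (t (n - 1)) (t n)) := by
  have ht : StrictMonoOn t (Set.Iic N) := strictMonoOn_Iic_of_lt_succ htmono
  have hab : t (n - 1) < t n := ht (by simp; omega) (by simpa) (by omega)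
  have hsub : Icc (t (n - 1)) (t n) ⊆ Icc 0 T := Icc_subset_Icc
    (ht0 ▸ ht.monotoneOn (by simp) (by simp; omega) (Nat.zero_le _))
    (htN ▸ ht.monotoneOn (by simpa) (by simp) hnN)
  have hg'c : ContinuousOn g' (Icc (t (n - 1)) (t n)) := fun x hx =>
    (hg'' x (hsub hx)).continuousAt.continuousWithinAt
  have hgc : ContinuousOn g (Icc (t (n - 1)) (t n)) := fun x hx =>
    (hg' x (hsub hx)).continuousAt.continuousWithinAt
  calc _ ≤ sSup ((fun s => |g' s|) '' Icc (t (n - 1)) (t n)) * (t n - t (n - 1)) / 2 *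
        ((t n - t (n - 1)) ^ α / α) :=
      abs_integral_mul_sub_rpow_le hα0 hab.le (hgc.sub continuousOn_const) fun s hs =>
        abs_sub_avg_endpoints_le (fun x hx => (hg' x (hsub hx)).hasDerivWithinAt)
          (fun x hx => abs_le_sSup_image_abs isCompact_Icc hg'c hx) hs
    _ = _ := by
      rw [Real.rpow_add (sub_pos.2 hab), Real.rpow_one]
      field_simp

/-- Bound on the quadrature error `(R_2)^n` on the last subinterval, containing the weak
singularity: `|(R_2)^n| ≤ τ_n^{1+α}/(2α) · max_{t_{n-1} ≤ t ≤ t_n} |g'(t)|`. -/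
theorem quadrature_error_last_interval
    (α T : ℝ) (hα0 : 0 < α) (hα1 : α < 1) (hT : 0 < T)
    (g g' g'' : ℝ → ℝ)
    (hg' : ∀ t ∈ Set.Icc (0 : ℝ) T, HasDerivAt g (g' t) t)
    (hg'' : ∀ t ∈ Set.Icc (0 : ℝ) T, HasDerivAt g' (g'' t) t)
    (hg''c : ContinuousOn g'' (Set.Icc (0 : ℝ) T))
    (N : ℕ) (hN : 1 ≤ N) (t : ℕ → ℝ)
    (ht0 : t 0 = 0) (htN : t N = T)
    (htmono : ∀ k < N, t k < t (k + 1))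
    (n : ℕ) (hn1 : 1 ≤ n) (hnN : n ≤ N) :
    |∫ s in t (n - 1)..t n,
        (g s - (g (t (n - 1)) + g (t n)) / 2) * (t n - s) ^ (α - 1)| ≤
      (t n - t (n - 1)) ^ (1 + α) / (2 * α) *
        sSup ((fun s => |g' s|) '' Set.Icc (t (n - 1)) (t n)) :=
  quadrature_error_last_interval_general α T hα0 g g' g'' hg' hg'' N t ht0 htN htmono n hn1 hnN
end

section
/- Let h > 0, let x be a real number, and let g : [x − h, x + h] → ℝ be six times continuously differentiable. Define ξ(s) = 5(1 − s)^3 − 3(1 − s)^5. Then (g″(x + h) + 10 g″(x) + g″(x − h))/12 = (g(x + h) − 2 g(x) + g(x − h))/h² + (h⁴/360) ∫_0^1 ξ(s) [ g⁽⁶⁾(x − s h) + g⁽⁶⁾(x + s h) ] ds. -/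
/-!
Expand `g` to order six and `g″` to order four around `x`, with the integral remainders written
over `[0, 1]` after the substitution `t = x ± s h`. In the combination
`(g″(x+h) + 10 g″(x) + g″(x-h))/12 - (g(x+h) - 2 g(x) + g(x-h))/h²` the odd derivatives cancel
between `x + h` and `x - h`, the terms in `g″` and `g⁽⁴⁾` cancel as well, and the remainders
`h⁴/72 ∫ (1-s)³ g⁽⁶⁾` and `h⁴/120 ∫ (1-s)⁵ g⁽⁶⁾` merge into `h⁴/360 ∫ (5 (1-s)³ - 3 (1-s)⁵) g⁽⁶⁾`.
-/

open MeasureTheory Set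
open scoped Nat Interval

section IteratedDerivWithin

variable {𝕜 F : Type*} [NontriviallyNormedField 𝕜] [NormedAddCommGroup F] [NormedSpace 𝕜 F]
  {f : 𝕜 → F} {s t : Set 𝕜} {x : 𝕜}

theorem iteratedDerivWithin_iteratedDerivWithin (k m : ℕ) :
    iteratedDerivWithin k (iteratedDerivWithin m f s) s = iteratedDerivWithin (k + m) f s := by
  have hm : iteratedDerivWithin m f s = (fun g : 𝕜 → F => derivWithin g s)^[m] f :=
    funext fun _ => iteratedDerivWithin_eq_iterate
  ext x
  rw [iteratedDerivWithin_eq_iterate, iteratedDerivWithin_eq_iterate, Function.iterate_add_apply,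
    hm]

theorem ContDiffOn.iteratedDerivWithin {m k : ℕ} (hf : ContDiffOn 𝕜 (m + k : ℕ) f s)
    (hs : UniqueDiffOn 𝕜 s) : ContDiffOn 𝕜 m (iteratedDerivWithin k f s) s := by
  induction k generalizing m with
  | zero => simpa using hf
  | succ k ih =>
    rw [iteratedDerivWithin_succ]
    exact (ih (m := m + 1) (by rwa [Nat.add_right_comm, Nat.add_assoc])).derivWithin hs (by simp)

theorem iteratedDerivWithin_subset {n : ℕ} (st : s ⊆ t) (hs : UniqueDiffOn 𝕜 s)
    (ht : UniqueDiffOn 𝕜 t) (hf : ContDiffOn 𝕜 n f t) (hx : x ∈ s) :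
    iteratedDerivWithin n f s x = iteratedDerivWithin n f t x := by
  simp only [iteratedDerivWithin_eq_iteratedFDerivWithin,
    iteratedFDerivWithin_subset st hs ht hf hx]

end IteratedDerivWithin

-- Mathlib's `taylor_integral_remainder` differentiates within `[[x, x + c]]`; for a `C^(n+1)`
-- function these derivatives agree with those within any larger `s`.
theorem taylor_integral_remainder_unitInterval {E : Type*} [NormedAddCommGroup E]
    [NormedSpace ℝ E] [CompleteSpace E] {f : ℝ → E} {s : Set ℝ} {n : ℕ} (hs : UniqueDiffOn ℝ s)
    (hf : ContDiffOn ℝ (n + 1 : ℕ) f s) {x c : ℝ} (hxc : [[x, x + c]] ⊆ s) :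
    f (x + c) = ∑ k ∈ Finset.range (n + 1), (c ^ k / k !) • iteratedDerivWithin k f s x +
      (c ^ (n + 1) / n !) •
        ∫ t in (0 : ℝ)..1, (1 - t) ^ n • iteratedDerivWithin (n + 1) f s (x + t * c) := by
  rcases eq_or_ne c 0 with rfl | hc
  · simp [Finset.sum_range_succ']
  have hu : UniqueDiffOn ℝ [[x, x + c]] := uniqueDiffOn_uIcc (by simpa using hc)
  have hD : ∀ k ≤ n + 1, ∀ y ∈ [[x, x + c]],
      iteratedDerivWithin k f [[x, x + c]] y = iteratedDerivWithin k f s y := fun k hk y hy =>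
    iteratedDerivWithin_subset hxc hu hs (hf.of_le (by exact_mod_cast hk)) hy
  have key := taylor_integral_remainder (hf.mono hxc)
  rw [taylor_within_apply, sub_eq_iff_eq_add', add_sub_cancel_left] at key
  rw [key]
  congr 1
  · refine Finset.sum_congr rfl fun k hk => ?_
    rw [hD k (Finset.mem_range.mp hk).le x left_mem_uIcc, div_eq_inv_mul]
  · have hsub := intervalIntegral.smul_integral_comp_add_mul (a := 0) (b := 1)
      (fun t => ((x + c - t) ^ n / n !) • iteratedDerivWithin (n + 1) f s t) c x
    rw [mul_zero, mul_one, add_zero] at hsub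
    rw [intervalIntegral.integral_congr fun t ht => by rw [hD _ le_rfl t ht], ← hsub,
      ← intervalIntegral.integral_smul, ← intervalIntegral.integral_smul]
    refine intervalIntegral.integral_congr fun t _ => ?_
    rw [smul_smul, smul_smul, mul_comm t c, show x + c - (x + c * t) = c * (1 - t) by ring,
      mul_pow, pow_succ]
    congr 1
    ring

theorem Set.mapsTo_add_mul_uIcc_zero_one (x c : ℝ) :
    MapsTo (fun t => x + t * c) [[0, 1]] [[x, x + c]] := by
  intro t ht
  have htc : t * c ∈ [[0 * c, 1 * c]] := image_mul_const_uIcc c 0 1 ▸ mem_image_of_mem _ ht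
  have hxtc := image_const_add_uIcc x _ _ ▸ mem_image_of_mem (fun y => x + y) htc
  simpa using hxtc

theorem ContinuousOn.intervalIntegrable_pow_mul_comp_add_mul {F : ℝ → ℝ} {s : Set ℝ}
    (hF : ContinuousOn F s) {x c : ℝ} (hxc : [[x, x + c]] ⊆ s) (n : ℕ) :
    IntervalIntegrable (fun t => (1 - t) ^ n * F (x + t * c)) volume 0 1 :=
  (((continuousOn_const.sub continuousOn_id).pow n).mul
    (hF.comp (by fun_prop) ((mapsTo_add_mul_uIcc_zero_one x c).mono_right hxc))).intervalIntegrable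

theorem integral_compactKernel_mul_eq {F : ℝ → ℝ} {s : Set ℝ} (hF : ContinuousOn F s) {x h : ℝ}
    (hs_pos : [[x, x + h]] ⊆ s) (hs_neg : [[x, x - h]] ⊆ s) :
    ∫ t in (0 : ℝ)..1, (5 * (1 - t) ^ 3 - 3 * (1 - t) ^ 5) * (F (x - t * h) + F (x + t * h)) =
      5 * ((∫ t in (0 : ℝ)..1, (1 - t) ^ 3 * F (x + t * h)) +
          ∫ t in (0 : ℝ)..1, (1 - t) ^ 3 * F (x + t * -h)) -
        3 * ((∫ t in (0 : ℝ)..1, (1 - t) ^ 5 * F (x + t * h)) +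
          ∫ t in (0 : ℝ)..1, (1 - t) ^ 5 * F (x + t * -h)) := by
  rw [sub_eq_add_neg] at hs_neg
  have I := fun c (hc : [[x, x + c]] ⊆ s) n => hF.intervalIntegrable_pow_mul_comp_add_mul hc n
  rw [← intervalIntegral.integral_add (I _ hs_pos 3) (I _ hs_neg 3),
    ← intervalIntegral.integral_add (I _ hs_pos 5) (I _ hs_neg 5),
    ← intervalIntegral.integral_const_mul, ← intervalIntegral.integral_const_mul,
    ← intervalIntegral.integral_sub (((I _ hs_pos 3).add (I _ hs_neg 3)).const_mul 5)
      (((I _ hs_pos 5).add (I _ hs_neg 5)).const_mul 3)]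
  refine intervalIntegral.integral_congr fun t _ => ?_
  simp only [mul_neg, ← sub_eq_add_neg]
  ring

theorem compact_difference_identity_of_uIcc_subset {S : Set ℝ} (hS : UniqueDiffOn ℝ S)
    {g : ℝ → ℝ} (hg : ContDiffOn ℝ 6 g S) {x h : ℝ} (hh : h ≠ 0) (hS_pos : [[x, x + h]] ⊆ S)
    (hS_neg : [[x, x - h]] ⊆ S) :
    (iteratedDerivWithin 2 g S (x + h) + 10 * iteratedDerivWithin 2 g S x +
        iteratedDerivWithin 2 g S (x - h)) / 12 =
      (g (x + h) - 2 * g x + g (x - h)) / h ^ 2 +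
        (h ^ 4 / 360) * ∫ t in (0 : ℝ)..1, (5 * (1 - t) ^ 3 - 3 * (1 - t) ^ 5) *
          (iteratedDerivWithin 6 g S (x - t * h) + iteratedDerivWithin 6 g S (x + t * h)) := by
  rw [integral_compactKernel_mul_eq (hg.continuousOn_iteratedDerivWithin le_rfl hS) hS_pos hS_neg]
  rw [sub_eq_add_neg] at hS_neg
  have hg₂ : ContDiffOn ℝ (3 + 1 : ℕ) (iteratedDerivWithin 2 g S) S := hg.iteratedDerivWithin hS
  have g_pos := taylor_integral_remainder_unitInterval (n := 5) hS hg hS_pos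
  have g_neg := taylor_integral_remainder_unitInterval (n := 5) hS hg hS_neg
  have g₂_pos := taylor_integral_remainder_unitInterval hS hg₂ hS_pos
  have g₂_neg := taylor_integral_remainder_unitInterval hS hg₂ hS_neg
  simp only [Finset.sum_range_succ, Finset.sum_range_zero, iteratedDerivWithin_iteratedDerivWithin,
    smul_eq_mul, Nat.factorial, iteratedDerivWithin_zero, ← sub_eq_add_neg]
    at g_pos g_neg g₂_pos g₂_neg
  rw [g_pos, g_neg, g₂_pos, g₂_neg]
  field_simp
  ring

/-- Fourth-order compact finite-difference identity (Lemma 4.1 of Zhang–Sun–Liao):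
for `g ∈ C^6[x−h, x+h]` and `ξ(s) = 5(1−s)³ − 3(1−s)⁵`,
`(g″(x+h) + 10g″(x) + g″(x−h))/12
  = (g(x+h) − 2g(x) + g(x−h))/h² + (h⁴/360) ∫₀¹ ξ(s)[g⁽⁶⁾(x−sh) + g⁽⁶⁾(x+sh)] ds`. -/
theorem compact_finite_difference_identity
    (h x : ℝ) (hh : 0 < h) (g : ℝ → ℝ)
    (hg : ContDiffOn ℝ 6 g (Set.Icc (x - h) (x + h))) :
    (iteratedDerivWithin 2 g (Set.Icc (x - h) (x + h)) (x + h) +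
        10 * iteratedDerivWithin 2 g (Set.Icc (x - h) (x + h)) x +
        iteratedDerivWithin 2 g (Set.Icc (x - h) (x + h)) (x - h)) / 12 =
      (g (x + h) - 2 * g x + g (x - h)) / h ^ 2 +
        (h ^ 4 / 360) *
          ∫ s in (0 : ℝ)..1,
            (5 * (1 - s) ^ 3 - 3 * (1 - s) ^ 5) *
              (iteratedDerivWithin 6 g (Set.Icc (x - h) (x + h)) (x - s * h) +
                iteratedDerivWithin 6 g (Set.Icc (x - h) (x + h)) (x + s * h)) := by
  have hx : x ∈ Icc (x - h) (x + h) := ⟨by linarith, by linarith⟩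
  exact compact_difference_identity_of_uIcc_subset (uniqueDiffOn_Icc (by linarith)) hg hh.ne'
    (uIcc_subset_Icc hx ⟨by linarith, le_rfl⟩) (uIcc_subset_Icc hx ⟨le_rfl, by linarith⟩)
end

section
/- Let M ≥ 2 be an integer, h = 1/M, and let v = (v_0, v_1, …, v_M) ∈ ℝ^{M+1} be a grid function with v_0 = v_M = 0. Then ‖v‖_h ≤ (1/√6) ‖δ_x v‖_h, i.e. h Σ_{i=1}^{M−1} v_i² ≤ (1/6) · h Σ_{i=1}^{M} ((v_i − v_{i−1})/h)². -/
/-!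
Write `d k = v k - v (k - 1)` and `S = ∑_{k=1}^M d k ²`. Since `v 0 = v M = 0`, `v i` is both
the sum of the first `i` increments and minus the sum of the last `M - i`, so Cauchy–Schwarz on
each side gives `v i ² ≤ i A` and `v i ² ≤ (M - i) B` with `A + B = S`; combining the two with
weights `M - i` and `i` yields `M v i ² ≤ i (M - i) S`. Summing and using
`∑_{i<M} i (M - i) = M (M² - 1) / 6` gives `∑ v i ² ≤ (M² - 1) S / 6 ≤ M² S / 6`, which is the
claim because `h ‖δ_x v‖_h² = M S`.
-/

open Finset

theorem Finset.sum_Ioc_sub_pred {G : Type*} [AddCommGroup G] (v : ℕ → G) {i j : ℕ} (hij : i ≤ j) :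
    ∑ k ∈ Ioc i j, (v k - v (k - 1)) = v j - v i := by
  induction j, hij using Nat.le_induction with
  | base => simp
  | succ j hij ih =>
    rw [sum_Ioc_succ_top hij, ih, Nat.add_sub_cancel]
    abel

theorem sq_sub_le_mul_sum_sq_sub_pred (v : ℕ → ℝ) {i j : ℕ} (hij : i ≤ j) :
    (v j - v i) ^ 2 ≤ ((j : ℝ) - i) * ∑ k ∈ Ioc i j, (v k - v (k - 1)) ^ 2 := by
  have h := sq_sum_le_card_mul_sum_sq (s := Ioc i j) (f := fun k => v k - v (k - 1))
  rwa [sum_Ioc_sub_pred v hij, Nat.card_Ioc, Nat.cast_sub hij] at h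

theorem sum_range_mul_sub (n : ℕ) :
    ∑ i ∈ range n, (i : ℝ) * (n - i) = n * ((n : ℝ) ^ 2 - 1) / 6 := by
  induction n with
  | zero => simp
  | succ n ih =>
    have gauss : (∑ i ∈ range (n + 1), (i : ℝ)) * 2 = (n + 1) * n := by
      simpa using congrArg (Nat.cast (R := ℝ)) (sum_range_id_mul_two (n + 1))
    have split : ∀ i ∈ range (n + 1), (i : ℝ) * ((n + 1 : ℕ) - i) = i * (n - i) + i := by
      intro i _
      push_cast
      ring
    rw [sum_congr rfl split, sum_add_distrib, sum_range_succ, ih]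
    push_cast
    linear_combination gauss / 2

section GridFunction

variable {M : ℕ} {v : ℕ → ℝ}

theorem mul_sq_le_of_boundary_eq_zero (hv0 : v 0 = 0) (hvM : v M = 0) {i : ℕ} (hiM : i ≤ M) :
    M * v i ^ 2 ≤ i * (M - i) * ∑ k ∈ Ioc 0 M, (v k - v (k - 1)) ^ 2 := by
  have left := sq_sub_le_mul_sum_sq_sub_pred v (Nat.zero_le i)
  have right := sq_sub_le_mul_sum_sq_sub_pred v hiM
  rw [hv0, sub_zero, Nat.cast_zero, sub_zero] at left
  rw [hvM, zero_sub, neg_sq] at right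
  rw [← sum_Ioc_consecutive _ (Nat.zero_le i) hiM]
  have hi : (0 : ℝ) ≤ i := i.cast_nonneg
  have hMi : (0 : ℝ) ≤ M - i := sub_nonneg.mpr (Nat.cast_le.mpr hiM)
  linarith [mul_le_mul_of_nonneg_left left hMi, mul_le_mul_of_nonneg_left right hi]

theorem sum_sq_le_of_boundary_eq_zero (hM : 0 < M) (hv0 : v 0 = 0) (hvM : v M = 0) :
    ∑ i ∈ Icc 1 (M - 1), v i ^ 2 ≤
      ((M : ℝ) ^ 2 - 1) / 6 * ∑ k ∈ Ioc 0 M, (v k - v (k - 1)) ^ 2 := by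
  set S := ∑ k ∈ Ioc 0 M, (v k - v (k - 1)) ^ 2
  have hS : 0 ≤ S := sum_nonneg fun k _ => sq_nonneg _
  have hMpos : (0 : ℝ) < M := Nat.cast_pos.mpr hM
  have weights : ∑ i ∈ Icc 1 (M - 1), (i : ℝ) * (M - i) ≤ M * ((M : ℝ) ^ 2 - 1) / 6 := by
    rw [← sum_range_mul_sub]
    refine sum_le_sum_of_subset_of_nonneg (fun i hi => ?_) (fun i hi _ => ?_)
    · simp only [mem_Icc, mem_range] at hi ⊢
      omega
    · exact mul_nonneg i.cast_nonneg (sub_nonneg.mpr (Nat.cast_le.mpr (mem_range.mp hi).le))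
  have pointwise :
      M * ∑ i ∈ Icc 1 (M - 1), v i ^ 2 ≤ (∑ i ∈ Icc 1 (M - 1), (i : ℝ) * (M - i)) * S := by
    rw [mul_sum, sum_mul]
    exact sum_le_sum fun i hi => mul_sq_le_of_boundary_eq_zero hv0 hvM (by simp at hi; omega)
  rw [← mul_le_mul_iff_of_pos_left hMpos]
  calc _ ≤ (∑ i ∈ Icc 1 (M - 1), (i : ℝ) * (M - i)) * S := pointwise
    _ ≤ M * ((M : ℝ) ^ 2 - 1) / 6 * S := mul_le_mul_of_nonneg_right weights hS
    _ = _ := by ring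

end GridFunction

theorem discrete_poincare_general
    (M : ℕ) (h : ℝ) (hh : h = 1 / (M : ℝ))
    (v : ℕ → ℝ) (hv0 : v 0 = 0) (hvM : v M = 0) :
    h * ∑ i ∈ Finset.Icc 1 (M - 1), (v i) ^ 2 ≤
      (1 / 6) * (h * ∑ i ∈ Finset.Icc 1 M, ((v i - v (i - 1)) / h) ^ 2) := by
  rcases M.eq_zero_or_pos with rfl | hM
  · simp
  subst hh
  have seminorm : ∑ i ∈ Icc 1 M, ((v i - v (i - 1)) / (1 / M)) ^ 2 =
      (M : ℝ) ^ 2 * ∑ k ∈ Ioc 0 M, (v k - v (k - 1)) ^ 2 := by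
    rw [← Icc_add_one_left_eq_Ioc, zero_add, mul_sum]
    exact sum_congr rfl fun i _ => by field_simp
  have bound := sum_sq_le_of_boundary_eq_zero hM hv0 hvM
  rw [seminorm]
  set S := ∑ k ∈ Ioc 0 M, (v k - v (k - 1)) ^ 2
  have hS : 0 ≤ S := sum_nonneg fun k _ => sq_nonneg _
  calc 1 / (M : ℝ) * ∑ i ∈ Icc 1 (M - 1), v i ^ 2 ≤ 1 / M * (((M : ℝ) ^ 2 - 1) / 6 * S) := by
        gcongr
    _ ≤ 1 / M * ((M : ℝ) ^ 2 / 6 * S) := by gcongr; linarith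
    _ = 1 / 6 * (1 / M * (M ^ 2 * S)) := by ring

/-- Discrete Poincaré inequality (Lemma 4.2 of Zhang–Sun–Liao): for a grid function `v`
with `v_0 = v_M = 0` and `h = 1/M`,
`h ∑_{i=1}^{M−1} v_i² ≤ (1/6) h ∑_{i=1}^{M} ((v_i − v_{i−1})/h)²`,
i.e. `‖v‖_h ≤ (1/√6) ‖δ_x v‖_h`. -/
theorem discrete_poincare
    (M : ℕ) (hM : 2 ≤ M) (h : ℝ) (hh : h = 1 / (M : ℝ))
    (v : ℕ → ℝ) (hv0 : v 0 = 0) (hvM : v M = 0) :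
    h * ∑ i ∈ Finset.Icc 1 (M - 1), (v i) ^ 2 ≤
      (1 / 6) * (h * ∑ i ∈ Finset.Icc 1 M, ((v i - v (i - 1)) / h) ^ 2) :=
  discrete_poincare_general M h hh v hv0 hvM
end

section
/- Let M ≥ 2 be an integer, h = 1/M, and let v, w ∈ ℝ^{M+1} be grid functions with v_0 = v_M = 0 and w_0 = w_M = 0. Then −h Σ_{i=1}^{M−1} (H_h v_i) · (δ_x² w_i) = ⟨v, w⟩_A, where H_h v_i = (v_{i+1} + 10 v_i + v_{i−1})/12, δ_x² w_i = (w_{i+1} − 2 w_i + w_{i−1})/h², and ⟨v, w⟩_A = h Σ_{i=1}^{M} δ_x v_{i−1/2} δ_x w_{i−1/2} − (h³/12) Σ_{i=1}^{M−1} δ_x² v_i · δ_x² w_i. -/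
open Finset

/-!
Abel summation turns `∑ vᵢ δ²wᵢ` into `-∑ δvᵢ₋₁/₂ δwᵢ₋₁/₂` plus boundary terms that vanish because
`v₀ = v_M = 0`. Since `H_h vᵢ = vᵢ + (h²/12) δ²vᵢ`, the remaining term is exactly the `h³/12` correction.
-/

section SummationByParts

variable {R : Type*} [CommRing R] (v w : ℕ → R)

theorem sum_Icc_mul_secondDiff_add_sum_Icc_diff_mul_diff (N : ℕ) :
    (∑ i ∈ Icc 1 N, v i * (w (i + 1) - 2 * w i + w (i - 1)))
        + ∑ i ∈ Icc 1 (N + 1), (v i - v (i - 1)) * (w i - w (i - 1)) =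
      v (N + 1) * (w (N + 1) - w N) - v 0 * (w 1 - w 0) := by
  induction N with
  | zero =>
    simp only [Order.lt_one_iff, Icc_eq_empty_of_lt, sum_empty, zero_add, Icc_self, sum_singleton,
      tsub_self]
    ring
  | succ n ih =>
    rw [sum_Icc_succ_top (by omega), sum_Icc_succ_top (by omega)]
    simp only [Nat.add_sub_cancel]
    linear_combination ih

theorem sum_Icc_mul_secondDiff_eq_neg_sum_Icc_diff_mul_diff {M : ℕ}
    (hv0 : v 0 = 0) (hvM : v M = 0) :
    ∑ i ∈ Icc 1 (M - 1), v i * (w (i + 1) - 2 * w i + w (i - 1)) =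
      -∑ i ∈ Icc 1 M, (v i - v (i - 1)) * (w i - w (i - 1)) := by
  rcases M with _ | N
  · simp
  · have := sum_Icc_mul_secondDiff_add_sum_Icc_diff_mul_diff v w N
    rw [hv0, hvM] at this
    simp only [Nat.add_sub_cancel]
    linear_combination this

end SummationByParts

theorem discrete_summation_by_parts_general
    (M : ℕ) (h : ℝ)
    (v w : ℕ → ℝ) (hv0 : v 0 = 0) (hvM : v M = 0) :
    -(h * ∑ i ∈ Finset.Icc 1 (M - 1),
        ((v (i + 1) + 10 * v i + v (i - 1)) / 12) *
          ((w (i + 1) - 2 * w i + w (i - 1)) / h ^ 2)) =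
      h * (∑ i ∈ Finset.Icc 1 M, ((v i - v (i - 1)) / h) * ((w i - w (i - 1)) / h)) -
        (h ^ 3 / 12) * ∑ i ∈ Finset.Icc 1 (M - 1),
          ((v (i + 1) - 2 * v i + v (i - 1)) / h ^ 2) *
            ((w (i + 1) - 2 * w i + w (i - 1)) / h ^ 2) := by
  rcases eq_or_ne h 0 with rfl | hh
  · simp
  have compact_split : ∑ i ∈ Icc 1 (M - 1),
      ((v (i + 1) + 10 * v i + v (i - 1)) / 12) * ((w (i + 1) - 2 * w i + w (i - 1)) / h ^ 2) =
        (∑ i ∈ Icc 1 (M - 1), v i * (w (i + 1) - 2 * w i + w (i - 1))) / h ^ 2 +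
          h ^ 2 / 12 * ∑ i ∈ Icc 1 (M - 1),
            ((v (i + 1) - 2 * v i + v (i - 1)) / h ^ 2) *
              ((w (i + 1) - 2 * w i + w (i - 1)) / h ^ 2) := by
    rw [sum_div, mul_sum, ← sum_add_distrib]
    refine sum_congr rfl fun i _ => ?_
    field_simp
    ring
  have first_diffs : ∑ i ∈ Icc 1 M, ((v i - v (i - 1)) / h) * ((w i - w (i - 1)) / h) =
      (∑ i ∈ Icc 1 M, (v i - v (i - 1)) * (w i - w (i - 1))) / h ^ 2 := by
    rw [sum_div]
    exact sum_congr rfl fun i _ => by ring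
  rw [compact_split, first_diffs,
    sum_Icc_mul_secondDiff_eq_neg_sum_Icc_diff_mul_diff v w hv0 hvM]
  field_simp
  ring

/-- Discrete summation-by-parts identity (Lemma 4.3 of Zhang–Sun–Liao):
`−h ∑_{i=1}^{M−1} (H_h v_i)(δ_x² w_i)
  = h ∑_{i=1}^{M} δ_x v_{i−1/2} δ_x w_{i−1/2} − (h³/12) ∑_{i=1}^{M−1} δ_x² v_i δ_x² w_i`. -/
theorem discrete_summation_by_parts
    (M : ℕ) (hM : 2 ≤ M) (h : ℝ) (hh : h = 1 / (M : ℝ))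
    (v w : ℕ → ℝ) (hv0 : v 0 = 0) (hvM : v M = 0) (hw0 : w 0 = 0) (hwM : w M = 0) :
    -(h * ∑ i ∈ Finset.Icc 1 (M - 1),
        ((v (i + 1) + 10 * v i + v (i - 1)) / 12) *
          ((w (i + 1) - 2 * w i + w (i - 1)) / h ^ 2)) =
      h * (∑ i ∈ Finset.Icc 1 M, ((v i - v (i - 1)) / h) * ((w i - w (i - 1)) / h)) -
        (h ^ 3 / 12) * ∑ i ∈ Finset.Icc 1 (M - 1),
          ((v (i + 1) - 2 * v i + v (i - 1)) / h ^ 2) *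
            ((w (i + 1) - 2 * w i + w (i - 1)) / h ^ 2) :=
  discrete_summation_by_parts_general M h v w hv0 hvM
end

section
/- Let 0 < α < 1 and λ ≥ 0, and define S : [0,∞) → ℝ by the absolutely convergent series S(t) = Σ_{m=0}^∞ (−λ t^α)^m / Γ(1 + m α) (i.e. S(t) = E_α(−λ t^α)). Then S solves the scalar Volterra integral equation S(t) = 1 − (λ/Γ(α)) ∫_0^t (t − τ)^{α−1} S(τ) dτ for every t ≥ 0. -/
/-!
Writing `S(τ) = ∑ₘ (-λ τ^α)^m / Γ(1 + mα)`, the Beta integral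
`∫₀ᵗ (t - τ)^{α-1} τ^{mα} dτ = Γ(α) Γ(1 + mα) / Γ(1 + (m+1)α) · t^{(m+1)α}` shows that
`-λ/Γ(α)` times the fractional integral of the `m`-th term is the `(m+1)`-th term. Integrating
the series term by term (dominated by `(t - τ)^{α-1} ∑ₘ |λ t^α|^m / Γ(1 + mα)`) therefore gives
`-(λ/Γ(α)) ∫₀ᵗ (t - τ)^{α-1} S(τ) dτ = S(t) - 1`. The series converges absolutely because
`Γ(1 + mα) ≥ R^{mα} e^{-R}` for every `R > 0`.
-/

open MeasureTheory Set
open scoped Interval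

namespace Real

theorem rpow_sub_one_mul_exp_neg_le_Gamma {s R : ℝ} (hs : 1 ≤ s) (hR : 0 < R) :
    R ^ (s - 1) * exp (-R) ≤ Gamma s := by
  have hs0 : 0 < s := by linarith
  calc R ^ (s - 1) * exp (-R)
      = ∫ x in Ioi R, R ^ (s - 1) * exp (-x) := by
        rw [integral_const_mul, integral_exp_neg_Ioi]
    _ ≤ ∫ x in Ioi R, exp (-x) * x ^ (s - 1) := by
        refine setIntegral_mono_on ((integrableOn_exp_neg_Ioi R).const_mul _)
          ((GammaIntegral_convergent hs0).mono_set (Ioi_subset_Ioi hR.le)) measurableSet_Ioi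
          fun x hx => ?_
        rw [mul_comm]
        exact mul_le_mul_of_nonneg_left (rpow_le_rpow hR.le (le_of_lt hx) (by linarith))
          (exp_pos _).le
    _ ≤ ∫ x in Ioi 0, exp (-x) * x ^ (s - 1) :=
        setIntegral_mono_set (GammaIntegral_convergent hs0)
          ((ae_restrict_iff' measurableSet_Ioi).2 (Filter.Eventually.of_forall fun x hx =>
            mul_nonneg (exp_pos _).le (rpow_nonneg (le_of_lt hx) _)))
          (Ioi_subset_Ioi hR.le).eventuallyLE
    _ = Gamma s := (Gamma_eq_integral hs0).symm

theorem integral_rpow_mul_one_sub_rpow {a b : ℝ} (ha : 0 < a) (hb : 0 < b) :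
    ∫ x in (0 : ℝ)..1, x ^ (a - 1) * (1 - x) ^ (b - 1) = Gamma a * Gamma b / Gamma (a + b) := by
  apply Complex.ofReal_injective
  push_cast [← intervalIntegral.integral_ofReal, ← Complex.Gamma_ofReal]
  rw [← Complex.betaIntegral_eq_Gamma_mul_div _ _ (by simpa) (by simpa), Complex.betaIntegral]
  refine intervalIntegral.integral_congr fun x hx => ?_
  rw [uIcc_of_le zero_le_one] at hx
  rw [Complex.ofReal_cpow hx.1, Complex.ofReal_cpow (by linarith [hx.2])]
  push_cast
  rfl

theorem integral_sub_rpow_mul_rpow {a b t : ℝ} (ha : 0 < a) (hb : 0 < b) (ht : 0 < t) :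
    ∫ τ in (0 : ℝ)..t, (t - τ) ^ (a - 1) * τ ^ (b - 1) =
      Gamma a * Gamma b / Gamma (a + b) * t ^ (a + b - 1) := by
  have hscale : ∀ x ∈ uIcc (0 : ℝ) 1, (t - t * x) ^ (a - 1) * (t * x) ^ (b - 1) =
      t ^ (a - 1) * t ^ (b - 1) * (x ^ (b - 1) * (1 - x) ^ (a - 1)) := by
    intro x hx
    rw [uIcc_of_le zero_le_one] at hx
    rw [show t - t * x = t * (1 - x) by ring, mul_rpow ht.le (by linarith [hx.2]),
      mul_rpow ht.le hx.1]
    ring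
  have hsub := intervalIntegral.smul_integral_comp_mul_left
    (fun τ => (t - τ) ^ (a - 1) * τ ^ (b - 1)) t (a := 0) (b := 1)
  simp only [mul_zero, mul_one, smul_eq_mul] at hsub
  rw [← hsub, intervalIntegral.integral_congr hscale, intervalIntegral.integral_const_mul,
    integral_rpow_mul_one_sub_rpow hb ha, show a + b - 1 = 1 + (a - 1) + (b - 1) by ring,
    rpow_add ht, rpow_add ht, rpow_one, add_comm b a, mul_comm (Gamma b)]
  ring

end Real

namespace intervalIntegral

theorem hasSum_integral_mul_of_abs_le {k G : ℝ → ℝ} {g : ℕ → ℝ → ℝ}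
    {b : ℕ → ℝ} {a t : ℝ} (hk : IntervalIntegrable k volume a t)
    (hg : ∀ m, AEStronglyMeasurable (g m) (volume.restrict (Ι a t))) (hb : Summable b)
    (hgb : ∀ m, ∀ τ ∈ Ι a t, |g m τ| ≤ b m) (hG : ∀ τ ∈ Ι a t, HasSum (g · τ) (G τ)) :
    HasSum (fun m => ∫ τ in a..t, k τ * g m τ) (∫ τ in a..t, k τ * G τ) := by
  refine hasSum_integral_of_dominated_convergence (fun m τ => |k τ| * b m)
    (fun m => hk.def'.aestronglyMeasurable.mul (hg m))
    (fun m => Filter.Eventually.of_forall fun τ hτ => ?_)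
    (Filter.Eventually.of_forall fun τ _ => hb.mul_left |k τ|) ?_
    (Filter.Eventually.of_forall fun τ hτ => (hG τ hτ).mul_left (k τ))
  · rw [Real.norm_eq_abs, abs_mul]
    exact mul_le_mul_of_nonneg_left (hgb m τ hτ) (abs_nonneg _)
  · simp_rw [tsum_mul_left]
    exact hk.abs.mul_const _

theorem intervalIntegrable_sub_rpow {r : ℝ} (hr : -1 < r) (a t : ℝ) :
    IntervalIntegrable (fun τ => (t - τ) ^ r) volume a t := by
  simpa using (intervalIntegrable_rpow' hr (a := t - a) (b := 0)).comp_sub_left t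

end intervalIntegral

noncomputable def mittagLefflerTerm (α z : ℝ) (m : ℕ) : ℝ := z ^ m / Real.Gamma (1 + m * α)

@[simp]
theorem mittagLefflerTerm_zero (α z : ℝ) : mittagLefflerTerm α z 0 = 1 := by
  simp [mittagLefflerTerm]

theorem abs_mittagLefflerTerm {α : ℝ} (hα : 0 ≤ α) (z : ℝ) (m : ℕ) :
    |mittagLefflerTerm α z m| = |z| ^ m / Real.Gamma (1 + m * α) := by
  rw [mittagLefflerTerm, abs_div, abs_pow, abs_of_pos (Real.Gamma_pos_of_pos (by positivity))]

theorem summable_abs_mittagLefflerTerm {α : ℝ} (hα : 0 < α) (z : ℝ) :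
    Summable fun m => |mittagLefflerTerm α z m| := by
  -- `R^α = |z| + 1` makes the lower bound for `Γ` geometric, of ratio `|z| / (|z| + 1)`.
  set R := (|z| + 1) ^ α⁻¹
  have hR : 0 < R := by positivity
  have hq : |z| / (|z| + 1) < 1 := (div_lt_one (by positivity)).2 (lt_add_one _)
  refine Summable.of_nonneg_of_le (fun m => abs_nonneg _) (fun m => ?_)
    ((summable_geometric_of_lt_one (by positivity) hq).mul_left (Real.exp R))
  have hGamma : (|z| + 1) ^ m * Real.exp (-R) ≤ Real.Gamma (1 + m * α) := by
    have h := Real.rpow_sub_one_mul_exp_neg_le_Gamma (s := 1 + m * α)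
      (le_add_of_nonneg_right (by positivity)) hR
    rwa [add_sub_cancel_left, ← Real.rpow_mul (by positivity),
      show α⁻¹ * (m * α) = m by field_simp, Real.rpow_natCast] at h
  calc |mittagLefflerTerm α z m|
      = |z| ^ m / Real.Gamma (1 + m * α) := abs_mittagLefflerTerm hα.le z m
    _ ≤ |z| ^ m / ((|z| + 1) ^ m * Real.exp (-R)) :=
        div_le_div_of_nonneg_left (by positivity) (by positivity) hGamma
    _ = Real.exp R * (|z| / (|z| + 1)) ^ m := by
        rw [div_pow, Real.exp_neg]
        field_simp

theorem abs_mittagLefflerTerm_mul_rpow_le {α τ t : ℝ} (hα : 0 ≤ α) (c : ℝ) (hτ : 0 ≤ τ)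
    (hτt : τ ≤ t) (m : ℕ) :
    |mittagLefflerTerm α (c * τ ^ α) m| ≤ |mittagLefflerTerm α (c * t ^ α) m| := by
  rw [abs_mittagLefflerTerm hα, abs_mittagLefflerTerm hα, abs_mul, abs_mul,
    abs_of_nonneg (Real.rpow_nonneg hτ α), abs_of_nonneg (Real.rpow_nonneg (hτ.trans hτt) α)]
  gcongr

theorem mul_integral_sub_rpow_mul_mittagLefflerTerm {α t : ℝ} (hα : 0 < α) (ht : 0 ≤ t)
    (c : ℝ) (m : ℕ) :
    c * ∫ τ in (0 : ℝ)..t, (t - τ) ^ (α - 1) * mittagLefflerTerm α (c * τ ^ α) m =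
      Real.Gamma α * mittagLefflerTerm α (c * t ^ α) (m + 1) := by
  rcases ht.eq_or_lt with rfl | ht
  · simp [mittagLefflerTerm, Real.zero_rpow hα.ne']
  have hterm : ∀ τ ∈ uIcc 0 t, (t - τ) ^ (α - 1) * mittagLefflerTerm α (c * τ ^ α) m =
      c ^ m / Real.Gamma (1 + m * α) * ((t - τ) ^ (α - 1) * τ ^ ((1 + m * α) - 1)) := by
    intro τ hτ
    rw [uIcc_of_le ht.le] at hτ
    rw [mittagLefflerTerm, mul_pow, ← Real.rpow_natCast (τ ^ α), ← Real.rpow_mul hτ.1,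
      add_sub_cancel_left, mul_comm α]
    ring
  have hΓ : Real.Gamma (1 + ↑(m + 1) * α) = Real.Gamma (α + (1 + m * α)) := by
    push_cast; ring_nf
  rw [intervalIntegral.integral_congr hterm, intervalIntegral.integral_const_mul,
    Real.integral_sub_rpow_mul_rpow hα (by positivity) ht, mittagLefflerTerm, hΓ,
    mul_pow, ← Real.rpow_natCast (t ^ α), ← Real.rpow_mul ht.le]
  have hΓm := (Real.Gamma_pos_of_pos (show 0 < 1 + m * α by positivity)).ne'
  have hΓm' := (Real.Gamma_pos_of_pos (show 0 < α + (1 + m * α) by positivity)).ne'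
  field_simp
  push_cast
  ring_nf


theorem mittag_leffler_solves_resolvent_equation_general
    (α lam : ℝ) (hα0 : 0 < α)
    (S : ℝ → ℝ)
    (hS : ∀ t ≥ (0 : ℝ),
      S t = ∑' m : ℕ, (-lam * t ^ α) ^ m / Real.Gamma (1 + (m : ℝ) * α)) :
    ∀ t ≥ (0 : ℝ),
      Summable (fun m : ℕ => |(-lam * t ^ α) ^ m / Real.Gamma (1 + (m : ℝ) * α)|) ∧
      S t = 1 - (lam / Real.Gamma α) * ∫ τ in (0 : ℝ)..t, (t - τ) ^ (α - 1) * S τ := by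
  have hsum (τ : ℝ) := summable_abs_mittagLefflerTerm hα0 (-lam * τ ^ α)
  have hS_hasSum : ∀ τ ≥ 0, HasSum (mittagLefflerTerm α (-lam * τ ^ α)) (S τ) :=
    fun τ hτ => hS τ hτ ▸ (hsum τ).of_abs.hasSum
  intro t ht
  refine ⟨hsum t, ?_⟩
  have hIoc : Ι 0 t = Ioc 0 t := uIoc_of_le ht
  have hintegral : HasSum (fun m => ∫ τ in (0 : ℝ)..t,
      (t - τ) ^ (α - 1) * mittagLefflerTerm α (-lam * τ ^ α) m)
      (∫ τ in (0 : ℝ)..t, (t - τ) ^ (α - 1) * S τ) :=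
    intervalIntegral.hasSum_integral_mul_of_abs_le
      (intervalIntegral.intervalIntegrable_sub_rpow (by linarith) 0 t)
      (fun m => by unfold mittagLefflerTerm; fun_prop) (hsum t)
      (fun m τ hτ => abs_mittagLefflerTerm_mul_rpow_le hα0.le _ (hIoc ▸ hτ).1.le (hIoc ▸ hτ).2 m)
      (fun τ hτ => hS_hasSum τ (hIoc ▸ hτ).1.le)
  have hlhs := hintegral.mul_left (-lam)
  simp_rw [mul_integral_sub_rpow_mul_mittagLefflerTerm hα0 ht] at hlhs
  have hrhs := ((hasSum_nat_add_iff' 1).2 (hS_hasSum t ht)).mul_left (Real.Gamma α)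
  have hresolvent := hlhs.unique hrhs
  rw [Finset.sum_range_one, mittagLefflerTerm_zero] at hresolvent
  have hΓ := (Real.Gamma_pos_of_pos hα0).ne'
  field_simp
  linarith

/-- The Mittag-Leffler function `S(t) = E_α(−λ t^α)`, defined by the absolutely convergent
series `∑_{m} (−λ t^α)^m / Γ(1 + mα)`, solves the scalar resolvent Volterra equation
`S(t) = 1 − (λ/Γ(α)) ∫₀ᵗ (t−τ)^{α−1} S(τ) dτ` for all `t ≥ 0`. -/
theorem mittag_leffler_solves_resolvent_equation
    (α lam : ℝ) (hα0 : 0 < α) (hα1 : α < 1) (hlam : 0 ≤ lam)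
    (S : ℝ → ℝ)
    (hS : ∀ t ≥ (0 : ℝ),
      S t = ∑' m : ℕ, (-lam * t ^ α) ^ m / Real.Gamma (1 + (m : ℝ) * α)) :
    ∀ t ≥ (0 : ℝ),
      Summable (fun m : ℕ => |(-lam * t ^ α) ^ m / Real.Gamma (1 + (m : ℝ) * α)|) ∧
      S t = 1 - (lam / Real.Gamma α) * ∫ τ in (0 : ℝ)..t, (t - τ) ^ (α - 1) * S τ :=
  mittag_leffler_solves_resolvent_equation_general α lam hα0 S hS
end

section
/- Let 0 < α < 1, T > 0, M ≥ 2, N ≥ 1, h = 1/M, and let 0 = t_0 < t_1 < … < t_N = T be a partition, with a_n^n = (t_n − t_{n−1})^α/Γ(α+1). Suppose the grid functions ε^0, ε^1, …, ε^N ∈ ℝ^{M+1} and residuals R^1, …, R^N ∈ ℝ^{M+1} satisfy the error equations: H_h ε^n_i = a_n^n δ_x² ε^n_i + a_n^n R^n_i for all 1 ≤ n ≤ N and 1 ≤ i ≤ M−1, with ε^n_0 = ε^n_M = 0 for 1 ≤ n ≤ N and ε^0_i = 0 for 0 ≤ i ≤ M. Then for every 1 ≤ n ≤ N, ‖ε^n‖_A²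 ≤ ‖ε^0‖_A² + (T^α/Γ(α+1)) ‖R^n‖_h², and hence ‖ε^n‖_A ≤ √(T^α/Γ(α+1)) · ‖R^n‖_h. -/
open Finset

/-- Compact grid operator `H_h v_i = (v_{i+1} + 10 v_i + v_{i−1})/12`. -/
noncomputable def Hgrid (v : ℕ → ℝ) (i : ℕ) : ℝ :=
  (v (i + 1) + 10 * v i + v (i - 1)) / 12

/-- Second difference `δ_x² v_i = (v_{i+1} − 2v_i + v_{i−1})/h²`. -/
noncomputable def deltaXX (h : ℝ) (v : ℕ → ℝ) (i : ℕ) : ℝ :=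
  (v (i + 1) - 2 * v i + v (i - 1)) / h ^ 2

/-- Squared discrete `A`-norm
`‖v‖_A² = h ∑_{i=1}^{M} (δ_x v_{i−1/2})² − (h³/12) ∑_{i=1}^{M−1} (δ_x² v_i)²`. -/
noncomputable def normAsq (M : ℕ) (h : ℝ) (v : ℕ → ℝ) : ℝ :=
  h * ∑ i ∈ Finset.Icc 1 M, ((v i - v (i - 1)) / h) ^ 2 -
    (h ^ 3 / 12) * ∑ i ∈ Finset.Icc 1 (M - 1), (deltaXX h v i) ^ 2

/-- Squared discrete `L²` norm `‖w‖_h² = h ∑_{i=1}^{M−1} w_i²`. -/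
noncomputable def normhsq (M : ℕ) (h : ℝ) (w : ℕ → ℝ) : ℝ :=
  h * ∑ i ∈ Finset.Icc 1 (M - 1), (w i) ^ 2

/-! Since `H_h = I + (h²/12) δ_x²`, summation by parts against the zero boundary values gives the
energy identity `‖ε‖_A² = -h ∑ H_h ε_i · δ_x² ε_i`. Inserting the error equation
`H_h ε = a (δ_x² ε + R)` and completing the square, `-(x + r) x ≤ r²/4`, gives
`‖ε^n‖_A² ≤ (a_n^n / 4) ‖R^n‖_h²`; moreover `a_n^n ≤ T^α/Γ(α+1)` since every step of the partition
is at most `T`, and `‖ε^0‖_A = 0`. -/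

theorem sum_mul_second_diff_Icc (e : ℕ → ℝ) (K : ℕ) :
    ∑ i ∈ Icc 1 K, e i * (e (i + 1) - 2 * e i + e (i - 1)) =
      e K * (e (K + 1) - e K) - e 0 * (e 1 - e 0) - ∑ i ∈ Icc 1 K, (e i - e (i - 1)) ^ 2 := by
  induction K with
  | zero => simp
  | succ K ih =>
    rw [sum_Icc_succ_top (by omega), sum_Icc_succ_top (by omega), ih, Nat.add_sub_cancel]
    ring

theorem sum_mul_second_diff_eq_neg_sum_sq {e : ℕ → ℝ} {M : ℕ} (he0 : e 0 = 0) (heM : e M = 0) :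
    ∑ i ∈ Icc 1 (M - 1), e i * (e (i + 1) - 2 * e i + e (i - 1)) =
      -∑ i ∈ Icc 1 M, (e i - e (i - 1)) ^ 2 := by
  rcases M with _ | K
  · simp
  · rw [Nat.add_sub_cancel, sum_mul_second_diff_Icc, sum_Icc_succ_top (by omega),
      Nat.add_sub_cancel, he0, heM]
    ring

theorem Hgrid_eq_add_deltaXX {h : ℝ} (hh : h ≠ 0) (v : ℕ → ℝ) (i : ℕ) :
    Hgrid v i = v i + h ^ 2 / 12 * deltaXX h v i := by
  unfold Hgrid deltaXX
  field_simp
  ring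

theorem normAsq_eq_neg_sum_Hgrid_mul_deltaXX {h : ℝ} (hh : h ≠ 0) {e : ℕ → ℝ} {M : ℕ}
    (he0 : e 0 = 0) (heM : e M = 0) :
    normAsq M h e = -h * ∑ i ∈ Icc 1 (M - 1), Hgrid e i * deltaXX h e i := by
  have hgrad : ∑ i ∈ Icc 1 M, ((e i - e (i - 1)) / h) ^ 2 =
      -∑ i ∈ Icc 1 (M - 1), e i * deltaXX h e i := by
    simp only [div_pow, deltaXX, mul_div_assoc', ← sum_div,
      sum_mul_second_diff_eq_neg_sum_sq he0 heM, neg_div, neg_neg]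
  simp only [normAsq, hgrad, Hgrid_eq_add_deltaXX hh, add_mul, sum_add_distrib, mul_assoc,
    ← mul_sum, ← sq]
  ring

theorem normhsq_nonneg {h : ℝ} (hh : 0 ≤ h) (M : ℕ) (w : ℕ → ℝ) : 0 ≤ normhsq M h w :=
  mul_nonneg hh (sum_nonneg fun _ _ => sq_nonneg _)

theorem normAsq_le_of_Hgrid_eq {h a : ℝ} (hh : 0 ≤ h) (ha : 0 ≤ a) {e r : ℕ → ℝ} {M : ℕ}
    (he0 : e 0 = 0) (heM : e M = 0)
    (herr : ∀ i ∈ Icc 1 (M - 1), Hgrid e i = a * deltaXX h e i + a * r i) :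
    normAsq M h e ≤ a / 4 * normhsq M h r := by
  have hpoint : ∀ x y : ℝ, -((a * x + a * y) * x) ≤ a / 4 * y ^ 2 := fun x y => by
    nlinarith [mul_nonneg ha (sq_nonneg (x + y / 2))]
  rcases hh.eq_or_lt with rfl | hpos
  · simp [normAsq, normhsq]
  rw [normAsq_eq_neg_sum_Hgrid_mul_deltaXX hpos.ne' he0 heM, normhsq]
  calc -h * ∑ i ∈ Icc 1 (M - 1), Hgrid e i * deltaXX h e i
      = h * ∑ i ∈ Icc 1 (M - 1), -((a * deltaXX h e i + a * r i) * deltaXX h e i) := by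
        rw [neg_mul_comm, ← sum_neg_distrib, sum_congr rfl fun i hi => by rw [herr i hi]]
    _ ≤ h * ∑ i ∈ Icc 1 (M - 1), a / 4 * r i ^ 2 := by gcongr with i; exact hpoint _ _
    _ = a / 4 * (h * ∑ i ∈ Icc 1 (M - 1), r i ^ 2) := by rw [← mul_sum]; ring

theorem normAsq_eq_zero_of_eq_zero {v : ℕ → ℝ} {M : ℕ} (hv : ∀ i ≤ M, v i = 0) (h : ℝ) :
    normAsq M h v = 0 := by
  have hgrad : ∀ i ∈ Icc 1 M, ((v i - v (i - 1)) / h) ^ 2 = 0 := fun i hi => by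
    rw [mem_Icc] at hi
    simp [hv i hi.2, hv (i - 1) (by omega)]
  have hsecond : ∀ i ∈ Icc 1 (M - 1), deltaXX h v i ^ 2 = 0 := fun i hi => by
    rw [mem_Icc] at hi
    simp [deltaXX, hv (i + 1) (by omega), hv i (by omega), hv (i - 1) (by omega)]
  simp [normAsq, sum_eq_zero hgrad, sum_eq_zero hsecond]

theorem sub_pred_mem_Ioc_of_lt_succ {t : ℕ → ℝ} {N : ℕ} (ht : ∀ k < N, t k < t (k + 1))
    {n : ℕ} (hn1 : 1 ≤ n) (hnN : n ≤ N) :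
    t n - t (n - 1) ∈ Set.Ioc 0 (t N - t 0) := by
  have hmono : StrictMonoOn t (Set.Iic N) := strictMonoOn_Iic_of_lt_succ ht
  have hstep : t (n - 1) < t n := hmono (by simp; omega) (by simpa using hnN) (by omega)
  have h0 : t 0 ≤ t (n - 1) := hmono.monotoneOn (by simp) (by simp; omega) (by omega)
  have hN : t n ≤ t N := hmono.monotoneOn (by simpa using hnN) (by simp) hnN
  constructor <;> linarith

theorem step_weight_nonneg_and_le {t : ℕ → ℝ} {N : ℕ} (ht : ∀ k < N, t k < t (k + 1)) {α : ℝ}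
    (hα : 0 ≤ α) {n : ℕ} (hn1 : 1 ≤ n) (hnN : n ≤ N) :
    0 ≤ (t n - t (n - 1)) ^ α / Real.Gamma (α + 1) ∧
      (t n - t (n - 1)) ^ α / Real.Gamma (α + 1) ≤ (t N - t 0) ^ α / Real.Gamma (α + 1) := by
  obtain ⟨hpos, hle⟩ := sub_pred_mem_Ioc_of_lt_succ ht hn1 hnN
  have hΓ : 0 ≤ Real.Gamma (α + 1) := (Real.Gamma_pos_of_pos (by linarith)).le
  exact ⟨by positivity, div_le_div_of_nonneg_right (Real.rpow_le_rpow hpos.le hle hα) hΓ⟩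

theorem error_equation_convergence_general
    (α T : ℝ) (hα0 : 0 < α)
    (M N : ℕ) (h : ℝ) (hh : h = 1 / (M : ℝ))
    (t : ℕ → ℝ) (ht0 : t 0 = 0) (htN : t N = T)
    (htmono : ∀ k < N, t k < t (k + 1))
    (ann : ℕ → ℝ)
    (hann : ∀ n : ℕ, 1 ≤ n → n ≤ N →
      ann n = (t n - t (n - 1)) ^ α / Real.Gamma (α + 1))
    (eps R : ℕ → ℕ → ℝ)
    (herr : ∀ n : ℕ, 1 ≤ n → n ≤ N → ∀ i : ℕ, 1 ≤ i → i ≤ M - 1 →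
      Hgrid (eps n) i = ann n * deltaXX h (eps n) i + ann n * R n i)
    (hbc : ∀ n : ℕ, 1 ≤ n → n ≤ N → eps n 0 = 0 ∧ eps n M = 0)
    (hinit : ∀ i ≤ M, eps 0 i = 0) :
    ∀ n : ℕ, 1 ≤ n → n ≤ N →
      normAsq M h (eps n) ≤
          normAsq M h (eps 0) + (T ^ α / Real.Gamma (α + 1)) * normhsq M h (R n) ∧
        Real.sqrt (normAsq M h (eps n)) ≤
          Real.sqrt (T ^ α / Real.Gamma (α + 1)) * Real.sqrt (normhsq M h (R n)) := by
  intro n hn1 hnN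
  obtain ⟨hann0, hannT⟩ := step_weight_nonneg_and_le htmono hα0.le hn1 hnN
  rw [← hann n hn1 hnN] at hann0 hannT
  rw [ht0, htN, sub_zero] at hannT
  have hh0 : 0 ≤ h := hh ▸ by positivity
  have hstep : ∀ i ∈ Icc 1 (M - 1),
      Hgrid (eps n) i = ann n * deltaXX h (eps n) i + ann n * R n i := fun i hi =>
    herr n hn1 hnN i (mem_Icc.1 hi).1 (mem_Icc.1 hi).2
  have hbound : normAsq M h (eps n) ≤ T ^ α / Real.Gamma (α + 1) * normhsq M h (R n) :=
    (normAsq_le_of_Hgrid_eq hh0 hann0 (hbc n hn1 hnN).1 (hbc n hn1 hnN).2 hstep).trans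
      (mul_le_mul_of_nonneg_right (by linarith) (normhsq_nonneg hh0 M _))
  rw [normAsq_eq_zero_of_eq_zero hinit, zero_add, ← Real.sqrt_mul (hann0.trans hannT)]
  exact ⟨hbound, Real.sqrt_le_sqrt hbound⟩

/-- Convergence estimate from the error equations: if
`H_h ε^n_i = a_n^n δ_x² ε^n_i + a_n^n R^n_i` with homogeneous boundary and initial data,
then `‖ε^n‖_A² ≤ ‖ε^0‖_A² + (T^α/Γ(α+1)) ‖R^n‖_h²` and hence
`‖ε^n‖_A ≤ √(T^α/Γ(α+1)) ‖R^n‖_h`. -/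
theorem error_equation_convergence
    (α T : ℝ) (hα0 : 0 < α) (hα1 : α < 1) (hT : 0 < T)
    (M N : ℕ) (hM : 2 ≤ M) (hN : 1 ≤ N) (h : ℝ) (hh : h = 1 / (M : ℝ))
    (t : ℕ → ℝ) (ht0 : t 0 = 0) (htN : t N = T)
    (htmono : ∀ k < N, t k < t (k + 1))
    (ann : ℕ → ℝ)
    (hann : ∀ n : ℕ, 1 ≤ n → n ≤ N →
      ann n = (t n - t (n - 1)) ^ α / Real.Gamma (α + 1))
    (eps R : ℕ → ℕ → ℝ)
    (herr : ∀ n : ℕ, 1 ≤ n → n ≤ N → ∀ i : ℕ, 1 ≤ i → i ≤ M - 1 →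
      Hgrid (eps n) i = ann n * deltaXX h (eps n) i + ann n * R n i)
    (hbc : ∀ n : ℕ, 1 ≤ n → n ≤ N → eps n 0 = 0 ∧ eps n M = 0)
    (hinit : ∀ i ≤ M, eps 0 i = 0) :
    ∀ n : ℕ, 1 ≤ n → n ≤ N →
      normAsq M h (eps n) ≤
          normAsq M h (eps 0) + (T ^ α / Real.Gamma (α + 1)) * normhsq M h (R n) ∧
        Real.sqrt (normAsq M h (eps n)) ≤
          Real.sqrt (T ^ α / Real.Gamma (α + 1)) * Real.sqrt (normhsq M h (R n)) :=
  error_equation_convergence_general α T hα0 M N h hh t ht0 htN htmono ann hann eps R herr hbc hinit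
end

section
/- Let M ≥ 2 be an integer, h = 1/M, and let v ∈ ℝ^{M+1} be a grid function with v_0 = v_M = 0. Then (2/3) ‖δ_x v‖_h² ≤ ‖v‖_A² ≤ ‖δ_x v‖_h²; in particular, the norms ‖·‖_A and ‖δ_x ·‖_h are equivalent on the space of grid functions vanishing at the endpoints. -/
open Finset

/-!
Since `h δ_x² v_i = δ_x v_{i+1/2} - δ_x v_{i-1/2}`, the bound `(a - b)² ≤ 2a² + 2b²` gives the
inverse inequality `h² Σ (δ_x² v_i)² ≤ 4 Σ (δ_x v)²` (each first difference is counted at most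
twice). Hence the correction term `(h³/12) Σ (δ_x² v_i)²` lies between `0` and a third of
`‖δ_x v‖_h²`.
-/

theorem sum_sq_sub_succ_le_four_mul_sum_sq {R : Type*} [CommRing R] [LinearOrder R]
    [IsStrictOrderedRing R]
    (f : ℕ → R) (M : ℕ) :
    ∑ i ∈ Icc 1 (M - 1), (f (i + 1) - f i) ^ 2 ≤ 4 * ∑ i ∈ Icc 1 M, f i ^ 2 := by
  have h_shift : ∑ i ∈ Icc 1 (M - 1), f (i + 1) ^ 2 ≤ ∑ i ∈ Icc 1 M, f i ^ 2 := by
    have h_map := sum_map (Icc 1 (M - 1)) (addRightEmbedding 1) fun i ↦ f i ^ 2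
    rw [map_add_right_Icc] at h_map
    simp only [addRightEmbedding_apply] at h_map
    rw [← h_map]
    exact sum_le_sum_of_subset_of_nonneg (fun i ↦ by simp only [mem_Icc]; omega)
      fun i _ _ ↦ sq_nonneg _
  have h_same : ∑ i ∈ Icc 1 (M - 1), f i ^ 2 ≤ ∑ i ∈ Icc 1 M, f i ^ 2 :=
    sum_le_sum_of_subset_of_nonneg (Icc_subset_Icc le_rfl (Nat.sub_le M 1))
      fun i _ _ ↦ sq_nonneg _
  calc ∑ i ∈ Icc 1 (M - 1), (f (i + 1) - f i) ^ 2
      ≤ ∑ i ∈ Icc 1 (M - 1), 2 * (f (i + 1) ^ 2 + f i ^ 2) :=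
        sum_le_sum fun i _ ↦ by
          simpa [sub_eq_add_neg] using add_sq_le (a := f (i + 1)) (b := -f i)
    _ = 2 * ∑ i ∈ Icc 1 (M - 1), f (i + 1) ^ 2 + 2 * ∑ i ∈ Icc 1 (M - 1), f i ^ 2 := by
        rw [← mul_add, ← sum_add_distrib, mul_sum]
    _ ≤ 4 * ∑ i ∈ Icc 1 M, f i ^ 2 := by linarith

theorem sq_mul_sum_secondDiff_sq_le {K : Type*} [Field K] [LinearOrder K]
    [IsStrictOrderedRing K] (v : ℕ → K) (h : K) (M : ℕ) :
    h ^ 2 * ∑ i ∈ Icc 1 (M - 1), ((v (i + 1) - 2 * v i + v (i - 1)) / h ^ 2) ^ 2 ≤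
      4 * ∑ i ∈ Icc 1 M, ((v i - v (i - 1)) / h) ^ 2 := by
  rcases eq_or_ne h 0 with rfl | hh
  · simp
  have h_secondDiff : ∀ i ∈ Icc 1 (M - 1),
      h ^ 2 * ((v (i + 1) - 2 * v i + v (i - 1)) / h ^ 2) ^ 2 =
        ((v (i + 1) - v (i + 1 - 1)) / h - (v i - v (i - 1)) / h) ^ 2 := by
    intro i _
    rw [Nat.add_sub_cancel]
    field_simp
    ring
  rw [mul_sum, sum_congr rfl h_secondDiff]
  exact sum_sq_sub_succ_le_four_mul_sum_sq (fun i ↦ (v i - v (i - 1)) / h) M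

theorem normA_equiv_deltaX_norm_general
    (M : ℕ) (h : ℝ) (hh : h = 1 / (M : ℝ))
    (v : ℕ → ℝ) :
    (2 / 3) * (h * ∑ i ∈ Finset.Icc 1 M, ((v i - v (i - 1)) / h) ^ 2) ≤
        h * (∑ i ∈ Finset.Icc 1 M, ((v i - v (i - 1)) / h) ^ 2) -
          (h ^ 3 / 12) * ∑ i ∈ Finset.Icc 1 (M - 1),
            ((v (i + 1) - 2 * v i + v (i - 1)) / h ^ 2) ^ 2 ∧
      h * (∑ i ∈ Finset.Icc 1 M, ((v i - v (i - 1)) / h) ^ 2) -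
          (h ^ 3 / 12) * ∑ i ∈ Finset.Icc 1 (M - 1),
            ((v (i + 1) - 2 * v i + v (i - 1)) / h ^ 2) ^ 2 ≤
        h * ∑ i ∈ Finset.Icc 1 M, ((v i - v (i - 1)) / h) ^ 2 := by
  have h_nonneg : 0 ≤ h := hh ▸ by positivity
  have h_inverse_ineq := sq_mul_sum_secondDiff_sq_le v h M
  have h_secondDiff_nonneg : 0 ≤ ∑ i ∈ Icc 1 (M - 1),
      ((v (i + 1) - 2 * v i + v (i - 1)) / h ^ 2) ^ 2 := sum_nonneg fun i _ ↦ sq_nonneg _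
  constructor
  · nlinarith [mul_le_mul_of_nonneg_left h_inverse_ineq h_nonneg]
  · nlinarith [mul_nonneg (pow_nonneg h_nonneg 3) h_secondDiff_nonneg]

/-- Equivalence of the norms `‖·‖_A` and `‖δ_x ·‖_h` on grid functions vanishing
at the endpoints: `(2/3) ‖δ_x v‖_h² ≤ ‖v‖_A² ≤ ‖δ_x v‖_h²`. -/
theorem normA_equiv_deltaX_norm
    (M : ℕ) (hM : 2 ≤ M) (h : ℝ) (hh : h = 1 / (M : ℝ))
    (v : ℕ → ℝ) (hv0 : v 0 = 0) (hvM : v M = 0) :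
    (2 / 3) * (h * ∑ i ∈ Finset.Icc 1 M, ((v i - v (i - 1)) / h) ^ 2) ≤
        h * (∑ i ∈ Finset.Icc 1 M, ((v i - v (i - 1)) / h) ^ 2) -
          (h ^ 3 / 12) * ∑ i ∈ Finset.Icc 1 (M - 1),
            ((v (i + 1) - 2 * v i + v (i - 1)) / h ^ 2) ^ 2 ∧
      h * (∑ i ∈ Finset.Icc 1 M, ((v i - v (i - 1)) / h) ^ 2) -
          (h ^ 3 / 12) * ∑ i ∈ Finset.Icc 1 (M - 1),
            ((v (i + 1) - 2 * v i + v (i - 1)) / h ^ 2) ^ 2 ≤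
        h * ∑ i ∈ Finset.Icc 1 M, ((v i - v (i - 1)) / h) ^ 2 :=
  normA_equiv_deltaX_norm_general M h hh v
end
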